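/- arXiv:2104.12598 — 5 statements merged into one kernel-verified Lean document; each statement's English description precedes it below -/
import Mathlib

section
/- Fix L > 1/2. There exist r₀ ∈ (0,1), constants C_L, C > 0, and for each integer α ≥ 1 a constant c_{L,α} > 0, such that for all r ∈ [r₀,1) and all integers α ≥ 1: c_{L,α}·(1−r) ≤ ∫_{−π}^{π} |(1−r²)/(1−r²e^{iθ})|^{2αL} · |(1−e^{iθ})/(1−r²e^{iθ})|² dθ ≤ C_L·α^{−3/2}·(1−r) + (C·(1−r))^{2αL}. -/
/-!
With `ε = 1 - r²`, `s = r²` and `β = αL` the integrand is the even function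
`momentKernel ε s β θ = (ε² / D) ^ β * (2 (1 - cos θ) / D)`, `D = ε² + 2 s (1 - cos θ)`.
On `[0, π]` one has `θ² / 5 ≤ 1 - cos θ ≤ θ² / 2`, so the kernel is at most `(θ / ε)²`, and at least
`2 ^ (-β) (θ / ε)² / 5` for `θ ≤ ε`, which gives the lower bound. With `z = (θ / ε)² / 5` the kernel
is at most `5 z (1 + z) ^ (-(β + 1))`, and Bernoulli's inequality
`((β + 1) / (L + 1) * z) ^ (L + 1) ≤ (1 + z) ^ (β + 1)` turns this into the decay
`(5 (L + 1) / (β + 1)) ^ (L + 1) (θ / ε) ^ (-2L)`, integrable at infinity because `L > 1/2`.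
Splitting the integral at `θ = ε / √(β + 1)` gives `O_L(ε (β + 1) ^ (-3/2))`.
-/

open Complex
open scoped Real

lemma sq_div_five_le_one_sub_cos {θ : ℝ} (hθ : |θ| ≤ π) : θ ^ 2 / 5 ≤ 1 - Real.cos θ := by
  have hcos := Real.cos_le_one_sub_mul_cos_sq hθ
  have hπ : π ^ 2 ≤ 10 := by nlinarith [Real.pi_lt_d2, Real.pi_pos]
  have : θ ^ 2 / 5 ≤ 2 / π ^ 2 * θ ^ 2 := by
    rw [div_mul_eq_mul_div, div_le_div_iff₀ (by norm_num) (by positivity)]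
    nlinarith [sq_nonneg θ]
  linarith

lemma mul_rpow_le_one_add_rpow {p q z : ℝ} (hq : 0 < q) (hqp : q ≤ p) (hz : 0 ≤ z) :
    (p / q * z) ^ q ≤ (1 + z) ^ p := by
  have hpq : 1 ≤ p / q := (one_le_div hq).2 hqp
  have hbern : 1 + p / q * z ≤ (1 + z) ^ (p / q) :=
    one_add_mul_self_le_rpow_one_add (by linarith) hpq
  calc (p / q * z) ^ q ≤ ((1 + z) ^ (p / q)) ^ q := by gcongr; linarith
    _ = (1 + z) ^ p := by rw [← Real.rpow_mul (by linarith), div_mul_cancel₀ _ hq.ne']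

lemma integral_rpow_neg_le {b c p : ℝ} (hb : 0 < b) (hbc : b ≤ c) (hp : 1 < p) :
    ∫ t in b..c, t ^ (-p) ≤ b ^ (1 - p) / (p - 1) := by
  have h0 : (0 : ℝ) ∉ Set.uIcc b c := by
    rw [Set.uIcc_of_le hbc]; exact fun h => by linarith [h.1]
  rw [integral_rpow (Or.inr ⟨by linarith, h0⟩), show -p + 1 = 1 - p by ring, ← neg_div_neg_eq,
    neg_sub, neg_sub]
  have : 0 ≤ c ^ (1 - p) := by have : 0 < c := hb.trans_le hbc; positivity
  gcongr
  linarith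

lemma integral_le_of_le_sq_of_le_rpow_neg {f : ℝ → ℝ} {a ε b B p : ℝ} (hf : Continuous f)
    (ha : 0 ≤ a) (hε : 0 < ε) (hb : 0 < b) (hB : 0 ≤ B) (hp : 1 < p)
    (hsq : ∀ θ ∈ Set.Icc 0 a, f θ ≤ (θ / ε) ^ 2)
    (htail : ∀ θ ∈ Set.Ioc 0 a, f θ ≤ B * (θ / ε) ^ (-p)) :
    ∫ θ in 0..a, f θ ≤ ε * (b ^ 3 / 3 + B * (b ^ (1 - p) / (p - 1))) := by
  have hsq_int : ∀ c, ∫ θ in 0..c, (θ / ε) ^ 2 = ε * ((c / ε) ^ 3 / 3) := by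
    intro c
    rw [intervalIntegral.integral_comp_div (fun t => t ^ 2) hε.ne', integral_pow]
    norm_num
  have htail_nonneg : 0 ≤ B * (b ^ (1 - p) / (p - 1)) := by
    have : 0 < p - 1 := by linarith
    positivity
  rcases le_or_gt a (ε * b) with hab | hab
  · calc ∫ θ in 0..a, f θ ≤ ∫ θ in 0..a, (θ / ε) ^ 2 :=
          intervalIntegral.integral_mono_on ha (hf.intervalIntegrable _ _)
            ((by fun_prop : Continuous fun θ : ℝ => (θ / ε) ^ 2).intervalIntegrable _ _) hsq
      _ = ε * ((a / ε) ^ 3 / 3) := hsq_int a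
      _ ≤ ε * (b ^ 3 / 3) := by
        have : a / ε ≤ b := (div_le_iff₀ hε).2 (by linarith)
        gcongr
      _ ≤ ε * (b ^ 3 / 3 + B * (b ^ (1 - p) / (p - 1))) := by
        gcongr; linarith
  · have hεb : 0 < ε * b := by positivity
    have hcont : ContinuousOn (fun θ => B * (θ / ε) ^ (-p)) (Set.uIcc (ε * b) a) := by
      rw [Set.uIcc_of_le hab.le]
      exact continuousOn_const.mul ((continuousOn_id.div_const ε).rpow_const
        fun θ hθ => Or.inl (div_ne_zero (hεb.trans_le hθ.1).ne' hε.ne'))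
    have hhead : ∫ θ in 0..ε * b, f θ ≤ ε * (b ^ 3 / 3) := by
      calc ∫ θ in 0..ε * b, f θ ≤ ∫ θ in 0..ε * b, (θ / ε) ^ 2 :=
            intervalIntegral.integral_mono_on hεb.le (hf.intervalIntegrable _ _)
              ((by fun_prop : Continuous fun θ : ℝ => (θ / ε) ^ 2).intervalIntegrable _ _)
              fun θ hθ => hsq θ ⟨hθ.1, hθ.2.trans hab.le⟩
        _ = ε * (b ^ 3 / 3) := by rw [hsq_int, mul_div_cancel_left₀ _ hε.ne']
    have htail' : ∫ θ in ε * b..a, f θ ≤ ε * (B * (b ^ (1 - p) / (p - 1))) := by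
      calc ∫ θ in ε * b..a, f θ ≤ ∫ θ in ε * b..a, B * (θ / ε) ^ (-p) :=
            intervalIntegral.integral_mono_on hab.le (hf.intervalIntegrable _ _)
              hcont.intervalIntegrable fun θ hθ => htail θ ⟨hεb.trans_le hθ.1, hθ.2⟩
        _ = ε * (B * ∫ t in b..a / ε, t ^ (-p)) := by
          rw [intervalIntegral.integral_const_mul,
            intervalIntegral.integral_comp_div (fun t => t ^ (-p)) hε.ne',
            mul_div_cancel_left₀ _ hε.ne', smul_eq_mul]
          ring
        _ ≤ ε * (B * (b ^ (1 - p) / (p - 1))) := by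
          gcongr
          exact integral_rpow_neg_le hb ((le_div_iff₀ hε).2 (by linarith)) hp
    rw [← intervalIntegral.integral_add_adjacent_intervals (hf.intervalIntegrable 0 (ε * b))
      (hf.intervalIntegrable _ a)]
    linarith

lemma integral_neg_eq_two_mul_integral_of_even {f : ℝ → ℝ} (hf : Continuous f)
    (heven : ∀ x, f (-x) = f x) (a : ℝ) : ∫ x in -a..a, f x = 2 * ∫ x in 0..a, f x := by
  rw [← intervalIntegral.integral_add_adjacent_intervals (b := 0) (hf.intervalIntegrable _ _)
    (hf.intervalIntegrable _ _)]
  have : ∫ x in -a..0, f x = ∫ x in 0..a, f x := by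
    simpa [heven] using (intervalIntegral.integral_comp_neg (a := 0) (b := a) f).symm
  rw [this]; ring

lemma norm_one_sub_ofReal_mul_exp_sq (s θ : ℝ) :
    ‖1 - (s : ℂ) * exp (θ * I)‖ ^ 2 = (1 - s) ^ 2 + 2 * s * (1 - Real.cos θ) := by
  rw [Complex.sq_norm, Complex.normSq_apply]
  simp [Complex.exp_mul_I, Complex.cos_ofReal_re, Complex.sin_ofReal_re]
  linear_combination s ^ 2 * Real.sin_sq_add_cos_sq θ

noncomputable def momentKernel (ε s β θ : ℝ) : ℝ :=
  (ε ^ 2 / (ε ^ 2 + 2 * s * (1 - Real.cos θ))) ^ β *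
    (2 * (1 - Real.cos θ) / (ε ^ 2 + 2 * s * (1 - Real.cos θ)))

lemma norm_rpow_mul_norm_sq_eq_momentKernel (r β θ : ℝ) :
    ‖(1 - (r : ℂ) ^ 2) / (1 - (r : ℂ) ^ 2 * exp (θ * I))‖ ^ (2 * β) *
      ‖(1 - exp (θ * I)) / (1 - (r : ℂ) ^ 2 * exp (θ * I))‖ ^ 2 =
    momentKernel (1 - r ^ 2) (r ^ 2) β θ := by
  have hden := norm_one_sub_ofReal_mul_exp_sq (r ^ 2) θ
  have hnum := norm_one_sub_ofReal_mul_exp_sq 1 θ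
  have hr : ‖1 - (r : ℂ) ^ 2‖ ^ 2 = (1 - r ^ 2) ^ 2 := by
    rw [← Complex.ofReal_pow, ← Complex.ofReal_one, ← Complex.ofReal_sub, Complex.norm_real,
      Real.norm_eq_abs, sq_abs]
  push_cast at hden
  norm_num at hnum
  rw [Real.rpow_mul (norm_nonneg _), Real.rpow_two, norm_div, norm_div, div_pow, div_pow, hden, hr,
    hnum, momentKernel]

section momentKernel

variable {ε s β : ℝ}

lemma momentKernel_nonneg (hs : 0 ≤ s) (θ : ℝ) : 0 ≤ momentKernel ε s β θ := by
  have hu := sub_nonneg.2 (Real.cos_le_one θ)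
  have hD : 0 ≤ ε ^ 2 + 2 * s * (1 - Real.cos θ) := by positivity
  unfold momentKernel
  positivity

lemma continuous_momentKernel (hε : ε ≠ 0) (hs : 0 ≤ s) : Continuous (momentKernel ε s β) := by
  have hD : ∀ θ, ε ^ 2 + 2 * s * (1 - Real.cos θ) ≠ 0 := fun θ => by
    have hu := sub_nonneg.2 (Real.cos_le_one θ)
    positivity
  refine Continuous.mul ?_ (by fun_prop (disch := exact hD _))
  exact (Continuous.div (by fun_prop) (by fun_prop) hD).rpow_const
    fun θ => Or.inl (div_ne_zero (pow_ne_zero 2 hε) (hD θ))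

lemma momentKernel_neg (θ : ℝ) : momentKernel ε s β (-θ) = momentKernel ε s β θ := by
  simp [momentKernel]

lemma momentKernel_le_sq (hε : ε ≠ 0) (hs : 0 ≤ s) (hβ : 0 ≤ β) (θ : ℝ) :
    momentKernel ε s β θ ≤ (θ / ε) ^ 2 := by
  have hu := sub_nonneg.2 (Real.cos_le_one θ)
  have hu' : 2 * (1 - Real.cos θ) ≤ θ ^ 2 := by linarith [Real.one_sub_sq_div_two_le_cos (x := θ)]
  have hε2 : 0 < ε ^ 2 := by positivity
  have hD : ε ^ 2 ≤ ε ^ 2 + 2 * s * (1 - Real.cos θ) := by nlinarith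
  calc momentKernel ε s β θ ≤ 1 * (θ ^ 2 / ε ^ 2) := by
        unfold momentKernel
        gcongr
        exact Real.rpow_le_one (by positivity) ((div_le_one (by linarith)).2 hD) hβ
    _ = (θ / ε) ^ 2 := by rw [one_mul, div_pow]

lemma half_rpow_mul_le_momentKernel (hε : 0 < ε) (hεπ : ε ≤ π) (hs0 : 0 ≤ s) (hs1 : s ≤ 1)
    (hβ : 0 ≤ β) {θ : ℝ} (hθ : θ ∈ Set.Icc 0 ε) :
    (1 / 2) ^ β * ((θ / ε) ^ 2 / 5) ≤ momentKernel ε s β θ := by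
  obtain ⟨hθ0, hθε⟩ := hθ
  have hlow := sq_div_five_le_one_sub_cos (θ := θ) (by rw [abs_of_nonneg hθ0]; linarith)
  have hup : 1 - Real.cos θ ≤ θ ^ 2 / 2 := by linarith [Real.one_sub_sq_div_two_le_cos (x := θ)]
  have hθε2 : θ ^ 2 ≤ ε ^ 2 := by nlinarith
  have hD : 0 < ε ^ 2 + 2 * s * (1 - Real.cos θ) := by nlinarith
  have hD2 : ε ^ 2 + 2 * s * (1 - Real.cos θ) ≤ 2 * ε ^ 2 := by nlinarith
  have hhalf : 1 / 2 ≤ ε ^ 2 / (ε ^ 2 + 2 * s * (1 - Real.cos θ)) := by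
    rw [le_div_iff₀ hD]; linarith
  have hquot : (θ / ε) ^ 2 / 5 ≤ 2 * (1 - Real.cos θ) / (ε ^ 2 + 2 * s * (1 - Real.cos θ)) := by
    rw [le_div_iff₀ hD]
    calc (θ / ε) ^ 2 / 5 * (ε ^ 2 + 2 * s * (1 - Real.cos θ))
        ≤ (θ / ε) ^ 2 / 5 * (2 * ε ^ 2) := by gcongr
      _ = 2 * (θ ^ 2 / 5) := by field_simp
      _ ≤ 2 * (1 - Real.cos θ) := by linarith
  exact mul_le_mul (Real.rpow_le_rpow (by norm_num) hhalf hβ) hquot (by positivity)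
    (by positivity)

lemma momentKernel_le_rpow_neg {L : ℝ} (hε : 0 < ε) (hs : 1 / 2 ≤ s) (hL : 0 < L) (hLβ : L ≤ β)
    {θ : ℝ} (hθ : θ ∈ Set.Ioc 0 π) :
    momentKernel ε s β θ ≤ (5 * (L + 1) / (β + 1)) ^ (L + 1) * (θ / ε) ^ (-(2 * L)) := by
  obtain ⟨hθ0, hθπ⟩ := hθ
  set z := (θ / ε) ^ 2 / 5 with hz_def
  have hz : 0 < z := by positivity
  have hlow := sq_div_five_le_one_sub_cos (θ := θ) (by rw [abs_of_pos hθ0]; exact hθπ)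
  have hup : 2 * (1 - Real.cos θ) ≤ θ ^ 2 := by
    linarith [Real.one_sub_sq_div_two_le_cos (x := θ)]
  have hε2 : 0 < ε ^ 2 := by positivity
  have hθ2 : θ ^ 2 = 5 * z * ε ^ 2 := by rw [hz_def, div_pow]; field_simp
  have hD : ε ^ 2 * (1 + z) ≤ ε ^ 2 + 2 * s * (1 - Real.cos θ) := by nlinarith
  have hD0 : 0 < ε ^ 2 * (1 + z) := by positivity
  have hcmp : momentKernel ε s β θ ≤ (1 + z) ^ (-β) * (5 * z / (1 + z)) := by
    have hfrac : ε ^ 2 / (ε ^ 2 + 2 * s * (1 - Real.cos θ)) ≤ (1 + z)⁻¹ := by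
      rw [div_le_iff₀ (by linarith), ← div_le_iff₀' (by positivity), div_inv_eq_mul]
      linarith
    have hquot : 2 * (1 - Real.cos θ) / (ε ^ 2 + 2 * s * (1 - Real.cos θ)) ≤ 5 * z / (1 + z) := by
      calc _ ≤ θ ^ 2 / (ε ^ 2 * (1 + z)) := div_le_div₀ (by positivity) hup hD0 hD
        _ = 5 * z / (1 + z) := by rw [hθ2]; field_simp
    rw [Real.rpow_neg (by positivity), ← Real.inv_rpow (by positivity)]
    unfold momentKernel
    exact mul_le_mul (Real.rpow_le_rpow (div_nonneg hε2.le (by linarith)) hfrac (by linarith)) hquot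
      (by have := sub_nonneg.2 (Real.cos_le_one θ); positivity) (by positivity)
  have hbern := mul_rpow_le_one_add_rpow (p := β + 1) (q := L + 1) (by linarith) (by linarith)
    hz.le
  have hθε : (θ / ε) ^ (-(2 * L)) = (5 * z) ^ (-L) := by
    rw [hz_def, mul_div_cancel₀ _ (by norm_num), neg_mul_eq_mul_neg,
      Real.rpow_mul (by positivity), Real.rpow_two]
  have hβ1 : 0 < β + 1 := by linarith
  have hc : 0 < (β + 1) / (L + 1) := by positivity
  calc momentKernel ε s β θ ≤ (1 + z) ^ (-β) * (5 * z / (1 + z)) := hcmp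
    _ = 5 * z / (1 + z) ^ (β + 1) := by
      rw [Real.rpow_neg (by positivity), Real.rpow_add_one (by positivity)]; field_simp
    _ ≤ 5 * z / ((β + 1) / (L + 1) * z) ^ (L + 1) := by gcongr
    _ = (5 * (L + 1) / (β + 1)) ^ (L + 1) * (θ / ε) ^ (-(2 * L)) := by
      rw [hθε, Real.mul_rpow hc.le hz.le, Real.rpow_add_one hz.ne', Real.rpow_neg (by positivity),
        Real.mul_rpow (by norm_num) hz.le, show 5 * (L + 1) / (β + 1) = 5 / ((β + 1) / (L + 1)) by
          field_simp, Real.div_rpow (by norm_num) hc.le]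
      field_simp
      rw [Real.rpow_add_one (by norm_num), mul_comm]

lemma integral_momentKernel_le {L : ℝ} (hε : 0 < ε) (hs : 1 / 2 ≤ s) (hL : 1 / 2 < L)
    (hLβ : L ≤ β) :
    ∫ θ in 0..π, momentKernel ε s β θ ≤
      (1 / 3 + (5 * (L + 1)) ^ (L + 1) / (2 * L - 1)) * ε * (β + 1) ^ (-(3 / 2 : ℝ)) := by
  have hβ1 : 0 < β + 1 := by linarith
  refine (integral_le_of_le_sq_of_le_rpow_neg (continuous_momentKernel hε.ne' (by linarith))
    Real.pi_pos.le hε (b := (β + 1) ^ (-(1 / 2 : ℝ))) (by positivity)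
    (B := (5 * (L + 1) / (β + 1)) ^ (L + 1)) (by positivity) (p := 2 * L) (by linarith)
    (fun θ _ => momentKernel_le_sq hε.ne' (by linarith) (by linarith) θ)
    (fun θ hθ => momentKernel_le_rpow_neg hε hs (by linarith) hLβ hθ)).trans_eq ?_
  have hb3 : ((β + 1) ^ (-(1 / 2 : ℝ))) ^ 3 = (β + 1) ^ (-(3 / 2 : ℝ)) := by
    rw [← Real.rpow_natCast, ← Real.rpow_mul hβ1.le]; norm_num
  have hB : (5 * (L + 1) / (β + 1)) ^ (L + 1) * ((β + 1) ^ (-(1 / 2 : ℝ))) ^ (1 - 2 * L) =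
      (5 * (L + 1)) ^ (L + 1) * (β + 1) ^ (-(3 / 2 : ℝ)) := by
    rw [Real.div_rpow (by positivity) hβ1.le, ← Real.rpow_mul hβ1.le, div_mul_eq_mul_div,
      mul_div_assoc, ← Real.rpow_sub hβ1]
    congr 2; ring
  rw [← mul_div_assoc, hB, hb3]
  ring

lemma le_integral_momentKernel (hε : 0 < ε) (hεπ : ε ≤ π) (hs0 : 0 ≤ s) (hs1 : s ≤ 1)
    (hβ : 0 ≤ β) :
    (1 / 2) ^ β * ε / 15 ≤ ∫ θ in 0..π, momentKernel ε s β θ := by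
  have hcont := continuous_momentKernel (β := β) hε.ne' hs0
  calc (1 / 2) ^ β * ε / 15 = ∫ θ in 0..ε, (1 / 2) ^ β * ((θ / ε) ^ 2 / 5) := by
        rw [intervalIntegral.integral_const_mul, intervalIntegral.integral_div,
          intervalIntegral.integral_comp_div (fun t => t ^ 2) hε.ne', integral_pow]
        field_simp
        ring
    _ ≤ ∫ θ in 0..ε, momentKernel ε s β θ :=
      intervalIntegral.integral_mono_on hε.le (Continuous.intervalIntegrable (by fun_prop) _ _)
        (hcont.intervalIntegrable _ _)
        fun _ hθ => half_rpow_mul_le_momentKernel hε hεπ hs0 hs1 hβ hθ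
    _ ≤ ∫ θ in 0..π, momentKernel ε s β θ :=
      intervalIntegral.integral_mono_interval le_rfl hε.le hεπ
        (Filter.Eventually.of_forall fun θ => momentKernel_nonneg hs0 θ)
        (hcont.intervalIntegrable _ _)

end momentKernel

lemma integral_eq_two_mul_integral_momentKernel {r : ℝ} (hr : 1 - r ^ 2 ≠ 0) (β : ℝ) :
    ∫ θ in (-π)..π,
        ‖(1 - (r : ℂ) ^ 2) / (1 - (r : ℂ) ^ 2 * exp (θ * I))‖ ^ (2 * β) *
          ‖(1 - exp (θ * I)) / (1 - (r : ℂ) ^ 2 * exp (θ * I))‖ ^ 2 =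
      2 * ∫ θ in 0..π, momentKernel (1 - r ^ 2) (r ^ 2) β θ := by
  simp_rw [norm_rpow_mul_norm_sq_eq_momentKernel]
  exact integral_neg_eq_two_mul_integral_of_even (continuous_momentKernel hr (sq_nonneg r))
    momentKernel_neg π

/-- two-sided bounds for the second-moment integral, for fixed `L > 1/2`,
uniformly in `r ∈ [r₀,1)` and `α ≥ 1`. -/
theorem statement8 (L : ℝ) (hL : 1/2 < L) :
    ∃ r₀ ∈ Set.Ioo (0 : ℝ) 1, ∃ CL > (0 : ℝ), ∃ C > (0 : ℝ), ∃ c : ℕ → ℝ,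
      (∀ α : ℕ, 1 ≤ α → 0 < c α) ∧
      ∀ r ∈ Set.Ico r₀ (1 : ℝ), ∀ α : ℕ, 1 ≤ α →
        c α * (1 - r) ≤
          (∫ θ in (-Real.pi)..Real.pi,
            ‖(1 - (r : ℂ) ^ 2) / (1 - (r : ℂ) ^ 2 * Complex.exp (θ * Complex.I))‖
                ^ (2 * (α : ℝ) * L) *
            ‖(1 - Complex.exp (θ * Complex.I)) /
                (1 - (r : ℂ) ^ 2 * Complex.exp (θ * Complex.I))‖ ^ 2) ∧
        (∫ θ in (-Real.pi)..Real.pi,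
            ‖(1 - (r : ℂ) ^ 2) / (1 - (r : ℂ) ^ 2 * Complex.exp (θ * Complex.I))‖
                ^ (2 * (α : ℝ) * L) *
            ‖(1 - Complex.exp (θ * Complex.I)) /
                (1 - (r : ℂ) ^ 2 * Complex.exp (θ * Complex.I))‖ ^ 2) ≤
          CL * (α : ℝ) ^ (-(3 / 2 : ℝ)) * (1 - r) + (C * (1 - r)) ^ (2 * (α : ℝ) * L) := by
  set M := 1 / 3 + (5 * (L + 1)) ^ (L + 1) / (2 * L - 1)
  have hM : 0 < M := by
    have : 0 < 2 * L - 1 := by linarith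
    positivity
  refine ⟨3 / 4, by norm_num, 4 * M * L ^ (-(3 / 2 : ℝ)), by positivity, 1, one_pos,
    fun α => 2 / 15 * (1 / 2) ^ ((α : ℝ) * L), fun α _ => by positivity, ?_⟩
  rintro r ⟨hr₀, hr₁⟩ α hα
  have hα : (1 : ℝ) ≤ α := by exact_mod_cast hα
  have hε : 0 < 1 - r ^ 2 := by nlinarith
  rw [mul_assoc (2 : ℝ), integral_eq_two_mul_integral_momentKernel hε.ne']
  have hlow := le_integral_momentKernel hε (by nlinarith [Real.pi_gt_three]) (sq_nonneg r)
    (by nlinarith) (by positivity : (0 : ℝ) ≤ α * L)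
  have hup := integral_momentKernel_le hε (s := r ^ 2) (by nlinarith) hL
    (le_mul_of_one_le_left (by linarith) hα)
  have hpow :
      ((α : ℝ) * L + 1) ^ (-(3 / 2 : ℝ)) ≤ (α : ℝ) ^ (-(3 / 2 : ℝ)) * L ^ (-(3 / 2 : ℝ)) := by
    rw [← Real.mul_rpow (by positivity) (by linarith)]
    exact Real.rpow_le_rpow_of_nonpos (by nlinarith) (by linarith) (by norm_num)
  constructor
  · calc 2 / 15 * (1 / 2) ^ ((α : ℝ) * L) * (1 - r)
        ≤ 2 / 15 * (1 / 2) ^ ((α : ℝ) * L) * (1 - r ^ 2) := by gcongr; nlinarith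
      _ ≤ _ := by linarith
  · calc 2 * ∫ θ in 0..π, momentKernel (1 - r ^ 2) (r ^ 2) (α * L) θ
        ≤ 2 * (M * (1 - r ^ 2) * ((α : ℝ) * L + 1) ^ (-(3 / 2 : ℝ))) := by gcongr
      _ ≤ 2 * (M * (2 * (1 - r)) * ((α : ℝ) ^ (-(3 / 2 : ℝ)) * L ^ (-(3 / 2 : ℝ)))) := by
          gcongr; nlinarith
      _ = 4 * M * L ^ (-(3 / 2 : ℝ)) * (α : ℝ) ^ (-(3 / 2 : ℝ)) * (1 - r) := by ring
      _ ≤ _ := le_add_of_nonneg_right (Real.rpow_nonneg (by linarith) _)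
end

section
/- Fix 0 < L < 1/2. Then lim_{x→1⁻} ∑_{m=0}^∞ a_{m,L}² x^m = Γ(1−2L)/Γ(1−L)², and moreover Γ(1−2L)/Γ(1−L)² = Γ(1/2−L)/(4^L·√π·Γ(1−L)). -/
/-!
The coefficients are `a_m = (L + m - 1).choose m`, those of the binomial series of `(1 - x)^(-L)`.
By the Beta integral, `Γ(L) Γ(1 - L) a_m = ∫₀¹ x^m x^(L-1) (1 - x)^(-L) dx`, so by monotone
convergence `Γ(L) Γ(1 - L) ∑ a_m² = ∫₀¹ x^(L-1) (1 - x)^(-2L) dx = B(L, 1 - 2L)`, that is,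
`∑ a_m² = Γ(1 - 2L) / Γ(1 - L)²`. Abel's theorem turns the convergence of `∑ a_m²` into the
limit as `x → 1⁻`, and the second identity is Legendre's duplication formula at `1/2 - L`.
-/

open Filter Real Set MeasureTheory Finset Topology
open scoped Nat

theorem Real.Gamma_add_nat_div_Gamma {s : ℝ} (hs : 0 < s) (n : ℕ) :
    Gamma (s + n) / Gamma s = (ascPochhammer ℝ n).eval s := by
  induction n with
  | zero => simp [(Gamma_pos_of_pos hs).ne']
  | succ n ih =>
    rw [ascPochhammer_succ_eval, ← ih, Nat.cast_succ, ← add_assoc,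
      Gamma_add_one (by positivity : s + n ≠ 0)]
    ring

theorem Real.Gamma_add_nat_div_Gamma_mul_factorial {s : ℝ} (hs : 0 < s) (n : ℕ) :
    Gamma (s + n) / (Gamma s * n !) = Ring.choose (s + n - 1) n := by
  have h := Ring.factorial_nsmul_multichoose_eq_ascPochhammer s n
  rw [Ring.multichoose_eq, Polynomial.ascPochhammer_smeval_eq_eval, nsmul_eq_mul] at h
  rw [← div_div, Gamma_add_nat_div_Gamma hs, ← h]
  field_simp

theorem Real.hasSum_choose_mul_pow {s x : ℝ} (hx : |x| < 1) :
    HasSum (fun n : ℕ ↦ Ring.choose (s + n - 1) n * x ^ n) ((1 - x) ^ (-s)) := by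
  have h := (one_div_one_sub_rpow_hasFPowerSeriesOnBall_zero s).hasSum
    (y := x) (by
      rwa [← ENNReal.coe_one, Metric.eball_coe, Metric.mem_ball, dist_zero_right, NNReal.coe_one])
  simpa [FormalMultilinearSeries.ofScalars_apply_eq, mul_comm,
    rpow_neg (by linarith [le_abs_self x] : (0:ℝ) ≤ 1 - x)] using h

theorem Complex.ofReal_rpow_mul_one_sub_rpow {s t x : ℝ} (hx : x ∈ Icc (0 : ℝ) 1) :
    ((x ^ (s - 1) * (1 - x) ^ (t - 1) : ℝ) : ℂ) =
      (x : ℂ) ^ (s - 1 : ℂ) * (1 - x : ℂ) ^ (t - 1 : ℂ) := by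
  rw [ofReal_mul, ofReal_cpow hx.1, ofReal_cpow (sub_nonneg.2 hx.2)]
  push_cast
  rfl

theorem Real.integrableOn_rpow_mul_one_sub_rpow {s t : ℝ} (hs : 0 < s) (ht : 0 < t) :
    IntegrableOn (fun x : ℝ ↦ x ^ (s - 1) * (1 - x) ^ (t - 1)) (Ioo 0 1) := by
  have h := Complex.betaIntegral_convergent (u := s) (v := t) (by simpa) (by simpa)
  rw [intervalIntegrable_iff_integrableOn_Ioo_of_le zero_le_one] at h
  refine IntegrableOn.congr_fun h.re (fun x hx ↦ ?_) measurableSet_Ioo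
  simp only [← Complex.ofReal_rpow_mul_one_sub_rpow (Ioo_subset_Icc_self hx),
    RCLike.re_to_complex, Complex.ofReal_re]

theorem Real.integral_rpow_mul_one_sub_rpow {s t : ℝ} (hs : 0 < s) (ht : 0 < t) :
    ∫ x in Ioo 0 1, x ^ (s - 1) * (1 - x) ^ (t - 1) = Gamma s * Gamma t / Gamma (s + t) := by
  have h := Complex.Gamma_mul_Gamma_eq_betaIntegral (s := s) (t := t) (by simpa) (by simpa)
  rw [Complex.betaIntegral, intervalIntegral.integral_of_le zero_le_one,
    integral_Ioc_eq_integral_Ioo, ← setIntegral_congr_fun measurableSet_Ioo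
      (fun x hx ↦ Complex.ofReal_rpow_mul_one_sub_rpow (Ioo_subset_Icc_self hx)),
    integral_complex_ofReal, ← Complex.ofReal_add, Complex.Gamma_ofReal, Complex.Gamma_ofReal,
    Complex.Gamma_ofReal] at h
  have hΓ : Gamma (s + t) ≠ 0 := (Gamma_pos_of_pos (add_pos hs ht)).ne'
  rw [eq_div_iff hΓ, mul_comm]
  exact_mod_cast h.symm

theorem Real.choose_add_nat_sub_one_pos {s : ℝ} (hs : 0 < s) (n : ℕ) :
    0 < Ring.choose (s + n - 1) n := by
  rw [← Gamma_add_nat_div_Gamma_mul_factorial hs]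
  have := Gamma_pos_of_pos hs
  have := Gamma_pos_of_pos (by positivity : 0 < s + n)
  positivity

theorem Real.pow_mul_rpow_mul_one_sub_rpow {s t x : ℝ} (hx : 0 < x) (m : ℕ) :
    x ^ m * (x ^ (s - 1) * (1 - x) ^ (t - 1)) = x ^ (s + m - 1) * (1 - x) ^ (t - 1) := by
  rw [← mul_assoc, ← rpow_natCast, ← rpow_add hx]
  ring_nf

theorem Real.integrableOn_pow_mul_rpow_mul_one_sub_rpow {s t : ℝ} (hs : 0 < s) (ht : 0 < t)
    (m : ℕ) :
    IntegrableOn (fun x : ℝ ↦ x ^ m * (x ^ (s - 1) * (1 - x) ^ (t - 1))) (Ioo 0 1) :=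
  (integrableOn_rpow_mul_one_sub_rpow (by positivity : 0 < s + m) ht).congr_fun
    (fun x hx ↦ (pow_mul_rpow_mul_one_sub_rpow hx.1 m).symm) measurableSet_Ioo

theorem Real.integral_pow_mul_rpow_mul_one_sub_rpow {s t : ℝ} (hs : 0 < s) (ht : 0 < t)
    (m : ℕ) : ∫ x in Ioo 0 1, x ^ m * (x ^ (s - 1) * (1 - x) ^ (t - 1)) =
      Gamma (s + m) * Gamma t / Gamma (s + t + m) := by
  rw [setIntegral_congr_fun measurableSet_Ioo
    (fun x hx ↦ pow_mul_rpow_mul_one_sub_rpow hx.1 m),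
    integral_rpow_mul_one_sub_rpow (by positivity) ht, add_right_comm]

theorem Real.integral_pow_mul_rpow_mul_one_sub_rpow_eq_choose {L : ℝ} (hL0 : 0 < L) (hL1 : L < 1)
    (m : ℕ) :
    ∫ x in Ioo 0 1, x ^ m * (x ^ (L - 1) * (1 - x) ^ ((1 - L) - 1)) =
      Gamma L * Gamma (1 - L) * Ring.choose (L + m - 1) m := by
  rw [integral_pow_mul_rpow_mul_one_sub_rpow hL0 (by linarith),
    ← Gamma_add_nat_div_Gamma_mul_factorial hL0, add_sub_cancel, add_comm (1 : ℝ),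
    Gamma_nat_eq_factorial]
  have := (Gamma_pos_of_pos hL0).ne'
  field_simp

theorem Real.tendsto_sum_range_choose_sq {L : ℝ} (hL0 : 0 < L) (hL : L < 1 / 2) :
    Tendsto (fun n ↦ ∑ m ∈ range n, Ring.choose (L + m - 1) m ^ 2) atTop
      (𝓝 (Gamma (1 - 2 * L) / Gamma (1 - L) ^ 2)) := by
  set c : ℕ → ℝ := fun m ↦ Ring.choose (L + m - 1) m
  set k : ℝ → ℝ := fun x ↦ x ^ (L - 1) * (1 - x) ^ ((1 - L) - 1)
  have hterm_int (m : ℕ) : IntegrableOn (fun x ↦ c m * (x ^ m * k x)) (Ioo 0 1) :=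
    (integrableOn_pow_mul_rpow_mul_one_sub_rpow hL0 (by linarith) m).const_mul (c m)
  have hsum_int (n : ℕ) : ∫ x in Ioo 0 1, (∑ m ∈ range n, c m * x ^ m) * k x =
      Gamma L * Gamma (1 - L) * ∑ m ∈ range n, c m ^ 2 := by
    conv_lhs => simp only [Finset.sum_mul, mul_assoc]
    rw [integral_finsetSum _ fun m _ ↦ hterm_int m, Finset.mul_sum]
    refine Finset.sum_congr rfl fun m _ ↦ ?_
    rw [integral_const_mul, integral_pow_mul_rpow_mul_one_sub_rpow_eq_choose hL0 (by linarith)]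
    ring
  have hlim : Tendsto (fun n ↦ ∫ x in Ioo 0 1, (∑ m ∈ range n, c m * x ^ m) * k x) atTop
      (𝓝 (∫ x in Ioo 0 1, x ^ (L - 1) * (1 - x) ^ ((1 - 2 * L) - 1))) := by
    refine integral_tendsto_of_tendsto_of_monotone (fun n ↦ ?_)
      (integrableOn_rpow_mul_one_sub_rpow hL0 (by linarith)) ?_ ?_
    · simp_rw [Finset.sum_mul, mul_assoc]
      exact integrable_finsetSum _ fun m _ ↦ hterm_int m
    · refine ae_restrict_of_forall_mem measurableSet_Ioo fun x hx ↦
        monotone_nat_of_le_succ fun n ↦ ?_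
      have hk : 0 ≤ k x := mul_nonneg (rpow_nonneg hx.1.le _) (rpow_nonneg (by linarith [hx.2]) _)
      rw [Finset.sum_range_succ, add_mul]
      exact le_add_of_nonneg_right <| mul_nonneg
        (mul_nonneg (choose_add_nat_sub_one_pos hL0 n).le (pow_nonneg hx.1.le n)) hk
    · refine ae_restrict_of_forall_mem measurableSet_Ioo fun x hx ↦ ?_
      have hx1 : 0 < 1 - x := by linarith [hx.2]
      have hseries := hasSum_choose_mul_pow (s := L) (abs_lt.2 ⟨by linarith [hx.1], hx.2⟩)
      convert hseries.tendsto_sum_nat.mul_const (k x) using 2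
      rw [← mul_assoc, mul_comm _ (x ^ _), mul_assoc, ← rpow_add hx1]
      ring_nf
  rw [funext hsum_int, integral_rpow_mul_one_sub_rpow hL0 (by linarith)] at hlim
  have hΓ : 0 < Gamma L * Gamma (1 - L) :=
    mul_pos (Gamma_pos_of_pos hL0) (Gamma_pos_of_pos (by linarith))
  convert hlim.const_mul (Gamma L * Gamma (1 - L))⁻¹ using 2
  · exact (inv_mul_cancel_left₀ hΓ.ne' _).symm
  · rw [show L + (1 - 2 * L) = 1 - L by ring]
    field_simp

theorem Real.Gamma_one_sub_two_mul_div_Gamma_one_sub_sq {L : ℝ} (hL : L < 1) :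
    Gamma (1 - 2 * L) / Gamma (1 - L) ^ 2 =
      Gamma (1 / 2 - L) / ((4 : ℝ) ^ L * √π * Gamma (1 - L)) := by
  have h := Gamma_mul_Gamma_add_half (1 / 2 - L)
  rw [show 1 / 2 - L + 1 / 2 = 1 - L by ring, show 2 * (1 / 2 - L) = 1 - 2 * L by ring,
    show 1 - (1 - 2 * L) = 2 * L by ring, rpow_mul zero_le_two] at h
  have := (Gamma_pos_of_pos (by linarith : 0 < 1 - L)).ne'
  have := pi_pos
  rw [div_eq_div_iff (by positivity) (by positivity)]
  norm_num at h ⊢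
  linear_combination Gamma (1 - L) * h.symm

/-- for fixed `0 < L < 1/2`,
`lim_{x→1⁻} ∑_m a_{m,L}² x^m = Γ(1−2L)/Γ(1−L)²`, and moreover
`Γ(1−2L)/Γ(1−L)² = Γ(1/2−L)/(4^L √π Γ(1−L))`. -/
theorem statement11 (L : ℝ) (hL0 : 0 < L) (hL : L < 1/2)
    (a : ℕ → ℝ) (ha : ∀ m, a m = Real.Gamma (L + m) / (Real.Gamma L * m.factorial)) :
    Tendsto (fun x : ℝ => ∑' m : ℕ, a m ^ 2 * x ^ m)
      (nhdsWithin 1 (Set.Iio 1))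
      (nhds (Real.Gamma (1 - 2 * L) / Real.Gamma (1 - L) ^ 2)) ∧
    Real.Gamma (1 - 2 * L) / Real.Gamma (1 - L) ^ 2 =
      Real.Gamma (1/2 - L) / ((4 : ℝ) ^ L * Real.sqrt Real.pi * Real.Gamma (1 - L)) := by
  obtain rfl : a = fun m : ℕ ↦ Ring.choose (L + m - 1) m :=
    funext fun m ↦ (ha m).trans (Gamma_add_nat_div_Gamma_mul_factorial hL0 m)
  exact ⟨tendsto_tsum_powerSeries_nhdsWithin_lt (tendsto_sum_range_choose_sq hL0 hL),
    Gamma_one_sub_two_mul_div_Gamma_one_sub_sq (by linarith)⟩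
end

section
/- Let L = 1/2, so a_{m,1/2} = Γ(1/2+m)/(Γ(1/2)·m!). Then ∑_{m=0}^∞ a_{m,1/2}² x^m = (1/π)·log(1/(1−x)) + O(1) as x → 1⁻; that is, there exists a constant C such that |∑_{m=0}^∞ a_{m,1/2}² x^m − (1/π)·log(1/(1−x))| ≤ C for all x ∈ (0,1). -/
/-!
The coefficients are `a m = (2m choose m) / 4 ^ m`, and Wallis' partial product satisfies
`W n = 1 / ((2n + 1) a n ^ 2)` with `(2n + 1) / (2n + 2) · π / 2 ≤ W n ≤ π / 2`.
Hence `a m ^ 2 = 1 / (π m) + O(1 / m ^ 2)`, so the series differs from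
`(1 / π) ∑ x ^ m / m = (1 / π) log (1 / (1 - x))` by a power series whose coefficients are
dominated by the summable `1 / m ^ 2`.
-/

open Real
open scoped Nat

noncomputable section

/-- The `m`-th Taylor coefficient of `(1 - x) ^ (-1 / 2)`. -/
def invSqrtCoeff (m : ℕ) : ℝ := m.centralBinom / 4 ^ m

lemma invSqrtCoeff_pos (m : ℕ) : 0 < invSqrtCoeff m :=
  div_pos (mod_cast m.centralBinom_pos) (by positivity)

lemma invSqrtCoeff_succ (m : ℕ) :
    invSqrtCoeff (m + 1) = invSqrtCoeff m * (2 * m + 1) / (2 * m + 2) := by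
  have h : ((m + 1 : ℕ) : ℝ) * (m + 1).centralBinom = 2 * (2 * m + 1) * m.centralBinom := by
    exact_mod_cast Nat.succ_mul_centralBinom_succ m
  push_cast at h
  rw [invSqrtCoeff, invSqrtCoeff, eq_div_iff (by positivity), pow_succ]
  field_simp
  linear_combination 2 * h

lemma Gamma_one_half_add_nat (m : ℕ) :
    Gamma (1 / 2 + m) = Gamma (1 / 2) * m ! * invSqrtCoeff m := by
  induction m with
  | zero => simp [invSqrtCoeff]
  | succ m ih =>
    rw [Nat.cast_succ, ← add_assoc, Gamma_add_one (by positivity), ih, invSqrtCoeff_succ,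
      Nat.factorial_succ]
    push_cast
    field_simp
    ring

lemma Gamma_one_half_add_nat_div (m : ℕ) :
    Gamma (1 / 2 + m) / (Gamma (1 / 2) * m !) = invSqrtCoeff m := by
  have : Gamma (1 / 2) ≠ 0 := by rw [Gamma_one_half_eq]; positivity
  rw [Gamma_one_half_add_nat, mul_div_cancel_left₀ _ (by positivity)]

lemma Real.Wallis.W_eq_inv_sq_invSqrtCoeff (n : ℕ) :
    Wallis.W n = 1 / ((2 * n + 1) * invSqrtCoeff n ^ 2) := by
  have h : (n.centralBinom : ℝ) * n ! * n ! = (2 * n)! := by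
    rw [Nat.centralBinom_eq_two_mul_choose, two_mul]
    exact_mod_cast Nat.add_choose_mul_factorial_mul_factorial n n
  have h4 : (2 : ℝ) ^ (4 * n) = (4 ^ n) ^ 2 := by
    rw [← pow_mul, show (4 : ℝ) = 2 ^ 2 by norm_num, ← pow_mul]; ring_nf
  rw [Wallis.W_eq_factorial_ratio, ← h, invSqrtCoeff, h4]
  field_simp

lemma two_div_pi_mul_le_sq_invSqrtCoeff (n : ℕ) :
    2 / (π * (2 * n + 1)) ≤ invSqrtCoeff n ^ 2 := by
  have h := Wallis.W_le n
  have hc := invSqrtCoeff_pos n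
  rw [Wallis.W_eq_inv_sq_invSqrtCoeff, div_le_div_iff₀ (by positivity) two_pos] at h
  rw [div_le_iff₀ (by positivity)]
  linarith

lemma sq_invSqrtCoeff_le (n : ℕ) :
    invSqrtCoeff n ^ 2 ≤ 4 * (n + 1) / (π * (2 * n + 1) ^ 2) := by
  have h := Wallis.le_W n
  have hc := invSqrtCoeff_pos n
  rw [Wallis.W_eq_inv_sq_invSqrtCoeff, div_mul_div_comm,
    div_le_div_iff₀ (by positivity) (by positivity)] at h
  rw [le_div_iff₀ (by positivity)]
  nlinarith

lemma abs_sq_invSqrtCoeff_sub_le {m : ℕ} (hm : m ≠ 0) :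
    |invSqrtCoeff m ^ 2 - 1 / π / m| ≤ 1 / (m : ℝ) ^ 2 := by
  have hm1 : (1 : ℝ) ≤ m := by exact_mod_cast Nat.one_le_iff_ne_zero.mpr hm
  have hupper : 4 * (m + 1) / (π * (2 * m + 1) ^ 2) ≤ 1 / π / m := by
    rw [div_div, div_le_div_iff₀ (by positivity) (by positivity)]
    nlinarith [pi_pos]
  have hgap : 1 / π / m - 2 / (π * (2 * m + 1)) = 1 / (π * m * (2 * m + 1)) := by
    field_simp
    ring
  have hgap_le : 1 / (π * m * (2 * m + 1)) ≤ 1 / (m : ℝ) ^ 2 :=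
    one_div_le_one_div_of_le (by positivity) (by nlinarith [pi_gt_three])
  rw [abs_le]
  constructor <;> linarith [sq_invSqrtCoeff_le m, two_div_pi_mul_le_sq_invSqrtCoeff m]

theorem abs_tsum_mul_pow_sub_mul_log_le {b d : ℕ → ℝ} {c x : ℝ} (hd : Summable d)
    (hb : ∀ n : ℕ, |b (n + 1) - c / (n + 1)| ≤ d n) (hx : |x| < 1) :
    |∑' m, b m * x ^ m - c * log (1 / (1 - x))| ≤ |b 0| + ∑' n, d n := by
  set e : ℕ → ℝ := fun n => (b (n + 1) - c / (n + 1)) * x ^ (n + 1)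
  have he : ∀ n, ‖e n‖ ≤ d n := fun n => by
    rw [Real.norm_eq_abs, abs_mul, abs_pow]
    exact (mul_le_of_le_one_right (abs_nonneg _) (pow_le_one₀ (abs_nonneg x) hx.le)).trans (hb n)
  have hsplit : (fun n => b (n + 1) * x ^ (n + 1)) =
      fun n => c * (x ^ (n + 1) / (n + 1)) + e n := by
    funext n
    simp only [e]
    ring
  have htail : HasSum (fun n => b (n + 1) * x ^ (n + 1)) (c * -log (1 - x) + ∑' n, e n) := by
    rw [hsplit]
    exact ((hasSum_pow_div_log_of_abs_lt_one hx).mul_left c).add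
      (Summable.of_norm_bounded hd he).hasSum
  rw [(HasSum.zero_add (f := fun m => b m * x ^ m) htail).tsum_eq, pow_zero, mul_one, one_div,
    log_inv]
  calc |b 0 + (c * -log (1 - x) + ∑' n, e n) - c * -log (1 - x)|
      = |b 0 + ∑' n, e n| := by congr 1; ring
    _ ≤ |b 0| + |∑' n, e n| := abs_add_le _ _
    _ ≤ |b 0| + ∑' n, d n := by gcongr; exact tsum_of_norm_bounded hd.hasSum he

/-- for `L = 1/2`, `∑_m a_{m,1/2}² x^m = (1/π) log(1/(1−x)) + O(1)` as
`x → 1⁻`: the difference is bounded uniformly on `(0,1)`. -/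
theorem statement13
    (a : ℕ → ℝ)
    (ha : ∀ m, a m = Real.Gamma (1/2 + m) / (Real.Gamma (1/2) * m.factorial)) :
    ∃ C : ℝ, ∀ x ∈ Set.Ioo (0 : ℝ) 1,
      |(∑' m : ℕ, a m ^ 2 * x ^ m) - (1 / Real.pi) * Real.log (1 / (1 - x))| ≤ C := by
  have ha' : ∀ m, a m = invSqrtCoeff m := fun m => (ha m).trans (Gamma_one_half_add_nat_div m)
  have hd : Summable fun n : ℕ => 1 / ((n : ℝ) + 1) ^ 2 := by
    exact_mod_cast (summable_nat_add_iff 1).mpr (summable_one_div_nat_pow.mpr one_lt_two)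
  refine ⟨|a 0 ^ 2| + ∑' n : ℕ, 1 / ((n : ℝ) + 1) ^ 2, fun x ⟨hx0, hx1⟩ => ?_⟩
  refine abs_tsum_mul_pow_sub_mul_log_le hd (fun n => ?_) (abs_lt.mpr ⟨by linarith, hx1⟩)
  simpa [ha'] using abs_sq_invSqrtCoeff_sub_le n.succ_ne_zero
end
end

section
/- Fix 0 < L < 1/2, set ρ = 1/(1−L) ∈ (1,2), and fix x ≤ 0. Then there exist a constant c > 0 depending only on ρ and a threshold Y₀ > 0 such that for all real y with |y| ≥ max(2|x|, Y₀): log|Ψ_L(x + iy)| ≥ c·|y|^ρ. -/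
open Filter Complex

noncomputable section

/-- `b_{m,L} = Γ(L)·m!/Γ(L+m)`. -/
def bmL (L : ℝ) (m : ℕ) : ℝ := Real.Gamma L * m.factorial / Real.Gamma (L + m)

/-- The canonical product `Ψ_L(z) = ∏_m (1 + z/b_{m,L}) e^{−z/b_{m,L}}` (genus 1). -/
def PsiL (L : ℝ) (z : ℂ) : ℂ :=
  ∏' m : ℕ, (1 + z / (bmL L m : ℂ)) * Complex.exp (-z / (bmL L m : ℂ))

/-!
Write `z = x + iy` and `w_m = z / b_{m,L}`, so that `log |Ψ_L(z)| = ∑ₘ (log |1 + w_m| - Re w_m)`.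
For `x ≤ 0` and `|y| ≥ 2|x|` every term is nonnegative, and it is at least `log 2` whenever
`b_{m,L} ≤ |y|/2`. Log-convexity of `Γ` (Gautschi's inequality) gives
`Γ(L) m^{1-L} ≤ b_{m,L} ≤ Γ(L) (m+1)^{1-L}`: the lower bound makes the product converge, and the
upper bound shows that `≍ |y|^ρ` indices have `b_{m,L} ≤ |y|/2`.
-/

theorem Real.Gamma_add_le_Gamma_mul_rpow {s a : ℝ} (hs : 0 < s) (ha₀ : 0 < a) (ha₁ : a < 1) :
    Real.Gamma (s + a) ≤ Real.Gamma s * s ^ a := by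
  have hΓ := Real.Gamma_pos_of_pos hs
  have h := Real.Gamma_mul_add_mul_le_rpow_Gamma_mul_rpow_Gamma hs (by linarith : 0 < s + 1)
    (sub_pos.2 ha₁) ha₀ (by ring)
  rwa [show (1 - a) * s + a * (s + 1) = s + a by ring, Real.Gamma_add_one hs.ne',
    Real.mul_rpow hs.le hΓ.le, mul_left_comm, ← Real.rpow_add hΓ, sub_add_cancel,
    Real.rpow_one, mul_comm (s ^ a)] at h

theorem Complex.hasSum_log_norm_tprod_one_add_mul_exp_neg {ι : Type*} {w : ι → ℂ}
    (hw : Summable fun i ↦ ‖w i‖ ^ 2) (hw₁ : ∀ i, 1 + w i ≠ 0) :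
    HasSum (fun i ↦ Real.log ‖1 + w i‖ - (w i).re)
      (Real.log ‖∏' i, (1 + w i) * exp (-w i)‖) := by
  have hw₀ : Tendsto w cofinite (nhds 0) := by
    rw [tendsto_zero_iff_norm_tendsto_zero]
    simpa using hw.tendsto_cofinite_zero.sqrt
  have hs : Summable fun i ↦ log (1 + w i) - w i :=
    summable_of_isBigO hw <| (log_sub_self_isBigO.comp_tendsto hw₀).trans <|
      (Asymptotics.isBigO_refl _ _).norm_right.congr_right fun i ↦ by simp
  have hprod : HasProd (fun i ↦ (1 + w i) * exp (-w i)) (exp (∑' i, (log (1 + w i) - w i))) := by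
    convert hs.hasSum.cexp using 1
    ext i
    simp [exp_sub, exp_log (hw₁ i), div_eq_mul_inv, exp_neg]
  rw [hprod.tprod_eq, norm_exp, Real.log_exp]
  simpa [log_re] using hasSum_re hs.hasSum

theorem Complex.re_le_log_norm_one_add {w : ℂ} (hre : w.re ≤ 0) (him : 2 * |w.re| ≤ |w.im|) :
    w.re ≤ Real.log ‖1 + w‖ := by
  -- `‖1 + w‖ ≥ 1 / (1 - a) ≥ exp a`, where `a = Re w`
  set a := w.re
  have ha : 0 < 1 - a := by linarith
  have hnorm : 1 ≤ ‖1 + w‖ * (1 - a) := by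
    have hsq : ‖1 + w‖ ^ 2 = (1 + a) ^ 2 + w.im ^ 2 := by
      rw [Complex.sq_norm, Complex.normSq_apply]
      simp only [add_re, one_re, add_im, one_im, zero_add, a]
      ring
    have him2 : 4 * a ^ 2 ≤ w.im ^ 2 := by nlinarith [sq_abs a, sq_abs w.im, abs_nonneg a]
    have hsq_prod : 1 ≤ (‖1 + w‖ * (1 - a)) ^ 2 := by
      rw [mul_pow, hsq]
      nlinarith [sq_nonneg a, mul_nonneg (sub_nonneg.2 him2) (sq_nonneg (1 - a)),
        mul_nonneg (sq_nonneg a) (neg_nonneg.2 hre)]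
    nlinarith [mul_nonneg (norm_nonneg (1 + w)) ha.le]
  have hlog : Real.log (1 - a) ≤ -a := by linarith [Real.log_le_sub_one_of_pos ha]
  have h1w : ‖1 + w‖ ≠ 0 := fun h ↦ by rw [h, zero_mul] at hnorm; linarith
  have hlog_prod := Real.log_nonneg hnorm
  rw [Real.log_mul h1w ha.ne'] at hlog_prod
  linarith

theorem Complex.log_two_le_log_norm_one_add {w : ℂ} (him : 2 ≤ |w.im|) :
    Real.log 2 ≤ Real.log ‖1 + w‖ :=
  Real.log_le_log two_pos <| him.trans <| by simpa using abs_im_le_norm (1 + w)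

section bmL

variable {L : ℝ}

theorem bmL_pos (hL₀ : 0 < L) (m : ℕ) : 0 < bmL L m := by
  have := Real.Gamma_pos_of_pos hL₀
  have := Real.Gamma_pos_of_pos (by positivity : 0 < L + m)
  unfold bmL; positivity

theorem Gamma_mul_rpow_le_bmL (hL₀ : 0 < L) (hL₁ : L < 1) (m : ℕ) :
    Real.Gamma L * (m : ℝ) ^ (1 - L) ≤ bmL L m := by
  rcases Nat.eq_zero_or_pos m with rfl | hm
  · simpa [Real.zero_rpow (sub_pos.2 hL₁).ne'] using (bmL_pos hL₀ 0).le
  have hm' : (0 : ℝ) < m := by exact_mod_cast hm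
  have hfact : (m.factorial : ℝ) = m ^ (1 - L) * m ^ L * Real.Gamma m := by
    rw [← Real.rpow_add hm', sub_add_cancel, Real.rpow_one, ← Real.Gamma_add_one hm'.ne',
      Real.Gamma_nat_eq_factorial]
  rw [bmL, le_div_iff₀ (Real.Gamma_pos_of_pos (by positivity)), hfact, add_comm L]
  calc Real.Gamma L * m ^ (1 - L) * Real.Gamma (m + L)
      ≤ Real.Gamma L * m ^ (1 - L) * (Real.Gamma m * m ^ L) := by
        gcongr; exact Real.Gamma_add_le_Gamma_mul_rpow hm' hL₀ hL₁
    _ = Real.Gamma L * (m ^ (1 - L) * m ^ L * Real.Gamma m) := by ring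

theorem bmL_le_Gamma_mul_rpow (hL₀ : 0 < L) (hL₁ : L < 1) (m : ℕ) :
    bmL L m ≤ Real.Gamma L * ((m : ℝ) + 1) ^ (1 - L) := by
  have hLm : 0 < L + m := by positivity
  have hΓ := Real.Gamma_pos_of_pos hLm
  have h := Real.Gamma_add_le_Gamma_mul_rpow hLm (sub_pos.2 hL₁) (by linarith)
  rw [show L + m + (1 - L) = m + 1 by ring, Real.Gamma_nat_eq_factorial] at h
  rw [bmL, div_le_iff₀ hΓ, mul_assoc]
  gcongr
  calc (m.factorial : ℝ) ≤ Real.Gamma (L + m) * (L + m) ^ (1 - L) := h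
    _ ≤ Real.Gamma (L + m) * (m + 1) ^ (1 - L) := by
        gcongr Real.Gamma (L + m) * ?_
        exact Real.rpow_le_rpow hLm.le (by linarith) (sub_pos.2 hL₁).le
    _ = _ := mul_comm _ _

theorem summable_inv_bmL_sq (hL₀ : 0 < L) (hL : L < 1 / 2) :
    Summable fun m ↦ (bmL L m ^ 2)⁻¹ := by
  have hL₁ : L < 1 := by linarith
  refine ((Real.summable_nat_rpow_inv.2 (by linarith : 1 < 2 * (1 - L))).mul_left
    (Real.Gamma L ^ 2)⁻¹).of_norm_bounded_eventually_nat ?_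
  filter_upwards [eventually_gt_atTop 0] with m hm
  have hm' : (0 : ℝ) < m := by exact_mod_cast hm
  rw [Real.norm_of_nonneg (by positivity), ← mul_inv, mul_comm 2, Real.rpow_mul hm'.le,
    Real.rpow_two, ← mul_pow]
  gcongr
  exact Gamma_mul_rpow_le_bmL hL₀ hL₁ m

theorem bmL_le_of_lt_floor (hL₀ : 0 < L) (hL₁ : L < 1) {R : ℝ} (hR : 0 ≤ R) {m : ℕ}
    (hm : m < ⌊(R / Real.Gamma L) ^ (1 / (1 - L))⌋₊) : bmL L m ≤ R := by
  have hΓ := Real.Gamma_pos_of_pos hL₀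
  have hT : (m : ℝ) + 1 ≤ (R / Real.Gamma L) ^ (1 / (1 - L)) := by
    calc (m : ℝ) + 1 ≤ ⌊(R / Real.Gamma L) ^ (1 / (1 - L))⌋₊ := by exact_mod_cast hm
      _ ≤ _ := Nat.floor_le (by positivity)
  calc bmL L m ≤ Real.Gamma L * ((m : ℝ) + 1) ^ (1 - L) := bmL_le_Gamma_mul_rpow hL₀ hL₁ m
    _ ≤ Real.Gamma L * ((R / Real.Gamma L) ^ (1 / (1 - L))) ^ (1 - L) := by gcongr
    _ = R := by
      rw [← Real.rpow_mul (by positivity), one_div_mul_cancel (sub_pos.2 hL₁).ne',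
        Real.rpow_one, mul_div_cancel₀ _ hΓ.ne']

end bmL

theorem hasSum_log_norm_PsiL {L : ℝ} (hL₀ : 0 < L) (hL : L < 1 / 2) {z : ℂ}
    (hz : ∀ m, 1 + z / bmL L m ≠ 0) :
    HasSum (fun m ↦ Real.log ‖1 + z / bmL L m‖ - (z / bmL L m).re) (Real.log ‖PsiL L z‖) := by
  have hw : Summable fun m ↦ ‖z / bmL L m‖ ^ 2 :=
    ((summable_inv_bmL_sq hL₀ hL).mul_left (‖z‖ ^ 2)).congr fun m ↦ by
      rw [norm_div, norm_real, Real.norm_of_nonneg (bmL_pos hL₀ m).le, div_pow, div_eq_mul_inv]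
  simpa only [PsiL, neg_div] using Complex.hasSum_log_norm_tprod_one_add_mul_exp_neg hw hz

theorem natCast_mul_log_two_le_log_norm_PsiL {L : ℝ} (hL₀ : 0 < L) (hL : L < 1 / 2)
    {x y : ℝ} (hx : x ≤ 0) (hxy : 2 * |x| ≤ |y|) (hy : y ≠ 0) {M : ℕ}
    (hM : ∀ m < M, bmL L m ≤ |y| / 2) :
    M * Real.log 2 ≤ Real.log ‖PsiL L (x + y * I)‖ := by
  set z : ℂ := x + y * I
  have hb := bmL_pos hL₀
  have hre (m : ℕ) : (z / bmL L m).re = x / bmL L m := by simp [z]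
  have him (m : ℕ) : (z / bmL L m).im = y / bmL L m := by simp [z]
  have hne (m : ℕ) : 1 + z / bmL L m ≠ 0 := fun h ↦ by
    have him₀ := congrArg im h
    simp only [add_im, one_im, him, zero_add, zero_im, div_eq_zero_iff] at him₀
    exact him₀.elim hy (hb m).ne'
  have hsum := hasSum_log_norm_PsiL hL₀ hL hne
  have hterm_nonneg (m : ℕ) : 0 ≤ Real.log ‖1 + z / bmL L m‖ - (z / bmL L m).re := by
    refine sub_nonneg.2 (re_le_log_norm_one_add ?_ ?_)
    · rw [hre]
      exact div_nonpos_of_nonpos_of_nonneg hx (hb m).le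
    · rw [hre, him, abs_div, abs_div, abs_of_pos (hb m), mul_div_assoc']
      exact div_le_div_of_nonneg_right hxy (hb m).le
  have hterm_large (m : ℕ) (hm : m < M) :
      Real.log 2 ≤ Real.log ‖1 + z / bmL L m‖ - (z / bmL L m).re := by
    have hlog := log_two_le_log_norm_one_add (w := z / bmL L m) <| by
      rw [him, abs_div, abs_of_pos (hb m), le_div_iff₀ (hb m)]
      linarith [hM m hm]
    rw [hre]
    linarith [div_nonpos_of_nonpos_of_nonneg hx (hb m).le]
  calc (M : ℝ) * Real.log 2 = ∑ _m ∈ Finset.range M, Real.log 2 := by simp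
    _ ≤ ∑ m ∈ Finset.range M, (Real.log ‖1 + z / bmL L m‖ - (z / bmL L m).re) :=
        Finset.sum_le_sum fun m hm ↦ hterm_large m (Finset.mem_range.1 hm)
    _ ≤ Real.log ‖PsiL L z‖ :=
        hsum.tsum_eq ▸ hsum.summable.sum_le_tsum _ fun m _ ↦ hterm_nonneg m

/-- for fixed `0 < L < 1/2` and `ρ = 1/(1−L)`, there is a constant `c > 0`
(depending only on `ρ`) such that for every `x ≤ 0` there is a threshold `Y₀ > 0` with
`log |Ψ_L(x+iy)| ≥ c |y|^ρ` whenever `|y| ≥ max(2|x|, Y₀)`. -/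
theorem statement17 (L : ℝ) (hL0 : 0 < L) (hL : L < 1/2)
    (ρ : ℝ) (hρ : ρ = 1 / (1 - L)) :
    ∃ c > (0 : ℝ), ∀ x : ℝ, x ≤ 0 → ∃ Y₀ > (0 : ℝ), ∀ y : ℝ,
      max (2 * |x|) Y₀ ≤ |y| →
      c * |y| ^ ρ ≤ Real.log ‖PsiL L (x + y * Complex.I)‖ := by
  subst hρ
  have hL1 : L < 1 := by linarith
  have hΓ := Real.Gamma_pos_of_pos hL0
  refine ⟨Real.log 2 / (2 * (2 * Real.Gamma L) ^ (1 / (1 - L))), by positivity,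
    fun x hx ↦ ⟨2 * Real.Gamma L, by positivity, fun y hy ↦ ?_⟩⟩
  obtain ⟨hxy, hyΓ⟩ := max_le_iff.1 hy
  set T := (|y| / 2 / Real.Gamma L) ^ (1 / (1 - L)) with hT_def
  have hT : 1 ≤ T := Real.one_le_rpow (by rw [div_div, one_le_div (by positivity)]; exact hyΓ)
    (by have := sub_pos.2 hL1; positivity)
  have hy : y ≠ 0 := abs_pos.1 (by linarith)
  refine le_trans ?_ (natCast_mul_log_two_le_log_norm_PsiL hL0 hL hx hxy hy
    fun m hm ↦ bmL_le_of_lt_floor hL0 hL1 (by positivity) hm)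
  calc Real.log 2 / (2 * (2 * Real.Gamma L) ^ (1 / (1 - L))) * |y| ^ (1 / (1 - L))
      = T / 2 * Real.log 2 := by
        rw [hT_def, div_div, Real.div_rpow (abs_nonneg y) (by positivity)]; ring
    _ ≤ ⌊T⌋₊ * Real.log 2 := by
        gcongr
        have : (1 : ℝ) ≤ ⌊T⌋₊ := Nat.one_le_cast.2 ((Nat.one_le_floor_iff T).2 hT)
        linarith [Nat.lt_floor_add_one T]
end
end

section
/- Fix 0 < L < 1/2. Then lim_{r→1⁻} ∑_{m=0}^∞ a_{m,L}² · (m·(1−r²) − L·r²)² · r^{4m} = L² · Γ(1−2L)/Γ(1−L)². -/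
/-!
The coefficients `a_m = (L)_m / m!` are those of the binomial series of `(1 - x) ^ (-L)`.
As `r → 1⁻` each summand tends to `a_m² L²`, and with `x = r²` it equals
`a_m² ((m (1 - x) - L x) x^m)²`, which is at most `a_m²` because `m (1 - x) x^m ≤ 1` on `[0, 1]`;
dominated convergence gives the limit `L² ∑ a_m²`. That sum is Gauss's
`₂F₁(L, L; 1; 1) = Γ(1 - 2L) / Γ(1 - L)²`: since `a_m B(L, 1 - L) = B(L + m, 1 - L)`, summing the
beta integrals under the integral sign with the binomial series
`∑ a_m t^(L+m-1) (1 - t)^(-L) = t^(L-1) (1 - t)^(-2L)` gives `B(L, 1 - 2L)`.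
-/

open Filter Set MeasureTheory ProbabilityTheory
open scoped Nat Topology ENNReal NNReal

theorem hasSum_of_tsum_ofReal_eq {ι : Type*} {f : ι → ℝ} {c : ℝ} (hf : ∀ i, 0 ≤ f i)
    (hc : 0 ≤ c) (h : ∑' i, ENNReal.ofReal (f i) = ENNReal.ofReal c) : HasSum f c := by
  lift c to ℝ≥0 using hc
  lift f to ι → ℝ≥0 using hf
  simp only [ENNReal.ofReal_coe_nnreal] at h
  exact NNReal.hasSum_coe.2 (ENNReal.hasSum_coe.1 (h ▸ ENNReal.summable.hasSum))

theorem lintegral_rpow_mul_one_sub_rpow {α β : ℝ} (hα : 0 < α) (hβ : 0 < β) :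
    ∫⁻ x in Ioo 0 1, ENNReal.ofReal (x ^ (α - 1) * (1 - x) ^ (β - 1)) =
      ENNReal.ofReal (beta α β) := by
  have hB := beta_pos hα hβ
  have hpdf := lintegral_betaPDF_eq_one hα hβ
  rw [lintegral_betaPDF] at hpdf
  calc ∫⁻ x in Ioo 0 1, ENNReal.ofReal (x ^ (α - 1) * (1 - x) ^ (β - 1))
      = ∫⁻ x in Ioo 0 1, ENNReal.ofReal (beta α β) *
          ENNReal.ofReal (1 / beta α β * x ^ (α - 1) * (1 - x) ^ (β - 1)) := by
        refine setLIntegral_congr_fun measurableSet_Ioo fun x _ ↦ ?_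
        rw [← ENNReal.ofReal_mul hB.le]
        field_simp
    _ = ENNReal.ofReal (beta α β) := by
        rw [lintegral_const_mul' _ _ ENNReal.ofReal_ne_top, hpdf, mul_one]

theorem nat_mul_one_sub_mul_pow_le_one {x : ℝ} (hx0 : 0 ≤ x) (hx1 : x ≤ 1) (m : ℕ) :
    m * (1 - x) * x ^ m ≤ 1 := by
  have h1x : 0 ≤ 1 - x := sub_nonneg.2 hx1
  calc (m : ℝ) * (1 - x) * x ^ m = (∑ _k ∈ Finset.range m, x ^ m) * (1 - x) := by
        rw [Finset.sum_const, Finset.card_range, nsmul_eq_mul]; ring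
    _ ≤ (∑ k ∈ Finset.range m, x ^ k) * (1 - x) := by
        refine mul_le_mul_of_nonneg_right (Finset.sum_le_sum fun k hk ↦ ?_) h1x
        exact pow_le_pow_of_le_one hx0 hx1 (Finset.mem_range.1 hk).le
    _ = 1 - x ^ m := geom_sum_mul_neg x m
    _ ≤ 1 := by linarith [pow_nonneg hx0 m]

theorem abs_nat_mul_one_sub_sub_mul_mul_pow_le_one {x L : ℝ} (hx0 : 0 ≤ x) (hx1 : x ≤ 1)
    (hL0 : 0 ≤ L) (hL1 : L ≤ 1) (m : ℕ) : |(m * (1 - x) - L * x) * x ^ m| ≤ 1 := by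
  rw [sub_mul, mul_assoc L, ← pow_succ']
  exact abs_sub_le_of_nonneg_of_le
    (mul_nonneg (mul_nonneg m.cast_nonneg (sub_nonneg.2 hx1)) (pow_nonneg hx0 m))
    (nat_mul_one_sub_mul_pow_le_one hx0 hx1 m) (by positivity)
    (mul_le_one₀ hL1 (pow_nonneg hx0 _) (pow_le_one₀ hx0 hx1))

theorem tendsto_tsum_mul_sq_mul_pow_nhdsLT_one {b : ℕ → ℝ} (hb : Summable b)
    (hb0 : ∀ m, 0 ≤ b m) {L : ℝ} (hL0 : 0 ≤ L) (hL1 : L ≤ 1) :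
    Tendsto (fun r : ℝ ↦ ∑' m : ℕ, b m * (m * (1 - r ^ 2) - L * r ^ 2) ^ 2 * r ^ (4 * m))
      (𝓝[<] 1) (𝓝 (∑' m, b m * L ^ 2)) := by
  refine tendsto_tsum_of_dominated_convergence hb (fun m ↦ ?_) ?_
  · have hcont : Continuous fun r : ℝ ↦ b m * (m * (1 - r ^ 2) - L * r ^ 2) ^ 2 * r ^ (4 * m) := by
      fun_prop
    simpa using (hcont.tendsto 1).mono_left nhdsWithin_le_nhds
  · filter_upwards [Ioo_mem_nhdsLT zero_lt_one] with r hr m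
    have hx1 : r ^ 2 ≤ 1 := pow_le_one₀ hr.1.le hr.2.le
    have h := abs_nat_mul_one_sub_sub_mul_mul_pow_le_one (sq_nonneg r) hx1 hL0 hL1 m
    calc ‖b m * (m * (1 - r ^ 2) - L * r ^ 2) ^ 2 * r ^ (4 * m)‖
        = b m * ((m * (1 - r ^ 2) - L * r ^ 2) * (r ^ 2) ^ m) ^ 2 := by
          rw [Real.norm_of_nonneg (by have := hb0 m; have := hr.1; positivity)]; ring
      _ ≤ b m * 1 := mul_le_mul_of_nonneg_left ((sq_le_one_iff_abs_le_one _).2 h) (hb0 m)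
      _ = b m := mul_one _

theorem Real.Gamma_add_nat_eq_ascPochhammer_mul {L : ℝ} (hL : 0 < L) (n : ℕ) :
    Real.Gamma (L + n) = (ascPochhammer ℝ n).eval L * Real.Gamma L := by
  induction n with
  | zero => simp
  | succ n ih =>
    rw [Nat.cast_succ, ← add_assoc, Real.Gamma_add_one (by positivity), ih,
      ascPochhammer_succ_right, Polynomial.eval_mul]
    simp only [Polynomial.eval_add, Polynomial.eval_X, Polynomial.eval_natCast]
    ring

noncomputable def pochhammerCoeff (L : ℝ) (m : ℕ) : ℝ := Real.Gamma (L + m) / (Real.Gamma L * m !)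

section Coefficients

variable {L : ℝ}

theorem Ring.choose_add_nat_sub_one_eq_pochhammerCoeff (hL : 0 < L) (n : ℕ) :
    Ring.choose (L + n - 1) n = pochhammerCoeff L n := by
  rw [Ring.choose_eq_smul, Polynomial.descPochhammer_smeval_eq_ascPochhammer,
    Polynomial.ascPochhammer_smeval_eq_eval, pochhammerCoeff,
    Real.Gamma_add_nat_eq_ascPochhammer_mul hL, smul_eq_mul]
  have : Real.Gamma L ≠ 0 := (Real.Gamma_pos_of_pos hL).ne'
  field_simp
  ring_nf

theorem pochhammerCoeff_pos (hL : 0 < L) (m : ℕ) : 0 < pochhammerCoeff L m := by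
  have := Real.Gamma_pos_of_pos hL
  have := Real.Gamma_pos_of_pos (show 0 < L + m by positivity)
  unfold pochhammerCoeff
  positivity

theorem hasSum_pochhammerCoeff_mul_pow (hL : 0 < L) {x : ℝ} (hx : |x| < 1) :
    HasSum (fun m ↦ pochhammerCoeff L m * x ^ m) ((1 - x) ^ (-L)) := by
  have h := (Real.one_div_one_sub_rpow_hasFPowerSeriesOnBall_zero L).hasSum
    (y := x) (by simpa [enorm_eq_nnnorm, ← NNReal.coe_lt_coe] using hx)
  have h1x : 0 ≤ 1 - x := by linarith [le_abs_self x]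
  simpa [FormalMultilinearSeries.ofScalars_apply_eq, mul_comm (x ^ _),
    Ring.choose_add_nat_sub_one_eq_pochhammerCoeff hL, Real.rpow_neg h1x] using h

theorem beta_add_nat_one_sub (hL : 0 < L) (m : ℕ) :
    beta (L + m) (1 - L) = pochhammerCoeff L m * beta L (1 - L) := by
  have : Real.Gamma L ≠ 0 := (Real.Gamma_pos_of_pos hL).ne'
  simp only [beta, pochhammerCoeff, show L + m + (1 - L) = m + 1 by ring, add_sub_cancel,
    Real.Gamma_one, Real.Gamma_nat_eq_factorial]
  field_simp

theorem hasSum_pochhammerCoeff_mul_beta_integrand (hL : 0 < L) {t : ℝ} (ht : t ∈ Ioo (0 : ℝ) 1) :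
    HasSum (fun m : ℕ ↦ pochhammerCoeff L m * (t ^ (L + m - 1) * (1 - t) ^ ((1 - L) - 1)))
      (t ^ (L - 1) * (1 - t) ^ ((1 - 2 * L) - 1)) := by
  have h1t : 0 < 1 - t := by linarith [ht.2]
  have hsum := (hasSum_pochhammerCoeff_mul_pow hL (x := t)
    (by rw [abs_of_pos ht.1]; exact ht.2)).mul_left (t ^ (L - 1) * (1 - t) ^ (-L))
  rw [mul_assoc, ← Real.rpow_add h1t, show -L + -L = (1 - 2 * L) - 1 by ring] at hsum
  refine hsum.congr_fun fun m ↦ ?_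
  rw [show L + m - 1 = (L - 1) + m by ring, Real.rpow_add ht.1, Real.rpow_natCast,
    show (1 - L) - 1 = -L by ring]
  ring

theorem lintegral_pochhammerCoeff_mul_beta_integrand (hL0 : 0 < L) (hL1 : 0 < 1 - L) (m : ℕ) :
    ∫⁻ t in Ioo 0 1,
        ENNReal.ofReal (pochhammerCoeff L m * (t ^ (L + m - 1) * (1 - t) ^ ((1 - L) - 1))) =
      ENNReal.ofReal (pochhammerCoeff L m ^ 2 * beta L (1 - L)) := by
  have hc := (pochhammerCoeff_pos hL0 m).le
  simp only [ENNReal.ofReal_mul hc]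
  rw [lintegral_const_mul' _ _ ENNReal.ofReal_ne_top,
    lintegral_rpow_mul_one_sub_rpow (by positivity) hL1, beta_add_nat_one_sub hL0,
    ← ENNReal.ofReal_mul hc]
  ring_nf

theorem hasSum_pochhammerCoeff_sq (hL0 : 0 < L) (hL : L < 1 / 2) :
    HasSum (fun m ↦ pochhammerCoeff L m ^ 2)
      (Real.Gamma (1 - 2 * L) / Real.Gamma (1 - L) ^ 2) := by
  have h1L : 0 < 1 - L := by linarith
  have h2L : 0 < 1 - 2 * L := by linarith
  set f : ℕ → ℝ → ℝ := fun m t ↦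
    pochhammerCoeff L m * (t ^ (L + m - 1) * (1 - t) ^ ((1 - L) - 1))
  have htsum : ∑' m, ENNReal.ofReal (pochhammerCoeff L m ^ 2 * beta L (1 - L)) =
      ENNReal.ofReal (beta L (1 - 2 * L)) := by
    calc ∑' m, ENNReal.ofReal (pochhammerCoeff L m ^ 2 * beta L (1 - L))
        = ∑' m, ∫⁻ t in Ioo 0 1, ENNReal.ofReal (f m t) := by
          simp_rw [f, lintegral_pochhammerCoeff_mul_beta_integrand hL0 h1L]
      _ = ∫⁻ t in Ioo 0 1, ∑' m, ENNReal.ofReal (f m t) :=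
          (lintegral_tsum fun m ↦ by fun_prop).symm
      _ = ∫⁻ t in Ioo 0 1, ENNReal.ofReal (t ^ (L - 1) * (1 - t) ^ ((1 - 2 * L) - 1)) := by
          refine setLIntegral_congr_fun measurableSet_Ioo fun t ht ↦ ?_
          have hsum := hasSum_pochhammerCoeff_mul_beta_integrand hL0 ht
          have hf : ∀ m, 0 ≤ f m t := fun m ↦ by
            have := pochhammerCoeff_pos hL0 m
            have := Real.rpow_pos_of_pos ht.1 (L + m - 1)
            have := Real.rpow_pos_of_pos (sub_pos.2 ht.2) ((1 - L) - 1)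
            positivity
          rw [← ENNReal.ofReal_tsum_of_nonneg hf hsum.summable, hsum.tsum_eq]
      _ = ENNReal.ofReal (beta L (1 - 2 * L)) := lintegral_rpow_mul_one_sub_rpow hL0 h2L
  have hB := beta_pos hL0 h1L
  have hscaled := (hasSum_of_tsum_ofReal_eq (fun m ↦ by positivity)
    (beta_pos hL0 h2L).le htsum).div_const (beta L (1 - L))
  simp only [mul_div_cancel_right₀ _ hB.ne'] at hscaled
  have hval : beta L (1 - 2 * L) / beta L (1 - L) =
      Real.Gamma (1 - 2 * L) / Real.Gamma (1 - L) ^ 2 := by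
    have := Real.Gamma_pos_of_pos hL0
    have := Real.Gamma_pos_of_pos h1L
    simp only [beta, show L + (1 - L) = 1 by ring, show L + (1 - 2 * L) = 1 - L by ring,
      Real.Gamma_one]
    field_simp
  rwa [hval] at hscaled

end Coefficients

/-- for fixed `0 < L < 1/2`,
`lim_{r→1⁻} ∑_m a_{m,L}² (m(1−r²) − Lr²)² r^{4m} = L² Γ(1−2L)/Γ(1−L)²`. -/
theorem statement19 (L : ℝ) (hL0 : 0 < L) (hL : L < 1/2)
    (a : ℕ → ℝ) (ha : ∀ m, a m = Real.Gamma (L + m) / (Real.Gamma L * m.factorial)) :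
    Tendsto
      (fun r : ℝ => ∑' m : ℕ, a m ^ 2 * (m * (1 - r ^ 2) - L * r ^ 2) ^ 2 * r ^ (4 * m))
      (nhdsWithin 1 (Set.Iio 1))
      (nhds (L ^ 2 * Real.Gamma (1 - 2 * L) / Real.Gamma (1 - L) ^ 2)) := by
  obtain rfl : a = pochhammerCoeff L := funext ha
  have hgauss := hasSum_pochhammerCoeff_sq hL0 hL
  have hlim := tendsto_tsum_mul_sq_mul_pow_nhdsLT_one hgauss.summable (fun m ↦ sq_nonneg _)
    hL0.le (by linarith)
  rwa [tsum_mul_right, hgauss.tsum_eq, div_mul_eq_mul_div, mul_comm] at hlim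
end
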